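/- Under the assumptions that W_λ : [0,∞) → (0,∞) is continuous nondecreasing with lim_{y→∞} W_λ(y + x)/W_λ(y) = e^{Φ_λ x} for all x ∈ ℝ (with W_λ = 0 on negatives), Z_λ(y) = 1 + λ∫₀^y W_λ, W := W_0 continuous nonnegative and bounded on [0, x], one has for each fixed x ≥ 0: lim_{a→−∞} [W_λ(x − a) − λ∫₀ˣ W_λ(z − a) W(x − z) dz] / Z_λ(−a) = (Φ_λ/λ)[e^{Φ_λ x} − λ∫₀ˣ e^{Φ_λ z} W(x − z) dz]. -/

import Mathlib

/-!
Put `y = -a`. The ratio hypothesis at `u = -1` gives `W_λ(y - 1) ≤ e^{-Φ/2} W_λ(y)` for large `y`;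
iterating and using monotonicity yields `W_λ(y - u) ≤ C e^{-Φu/2} W_λ(y)` for `0 ≤ u ≤ y`, and in
particular `W_λ → ∞`. Dominated convergence then gives
`∫₀^y W_λ / W_λ(y) = ∫₀^y W_λ(y - u)/W_λ(y) du → ∫₀^∞ e^{-Φu} du = 1/Φ`, so `W_λ(y)/Z_λ(y) → Φ/λ`,
while the numerator divided by `W_λ(y)` converges by dominated convergence on `[0, x]`.
-/

open MeasureTheory Set Filter intervalIntegral Real Topology

section ExponentialDecay

variable {f : ℝ → ℝ} {c y₀ : ℝ}

lemma apply_sub_natCast_le (hstep : ∀ y ≥ y₀, f (y - 1) ≤ exp (-c) * f y) (k : ℕ) {y : ℝ}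
    (hy : y₀ + k ≤ y) : f (y - k) ≤ exp (-c * k) * f y := by
  induction k generalizing y with
  | zero => simp
  | succ k ih =>
    push_cast at hy ⊢
    calc f (y - (k + 1)) = f (y - 1 - k) := by ring_nf
      _ ≤ exp (-c * k) * f (y - 1) := ih (by linarith)
      _ ≤ exp (-c * k) * (exp (-c) * f y) := by gcongr; exact hstep y (by linarith)
      _ = exp (-c * (k + 1)) * f y := by rw [← mul_assoc, ← exp_add]; ring_nf

lemma apply_le_exp_mul_apply (hf : Monotone f) (hc : 0 ≤ c)
    (hstep : ∀ y ≥ y₀, f (y - 1) ≤ exp (-c) * f y) {s y : ℝ} (hs : y₀ ≤ s) (hsy : s ≤ y)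
    (hfy : 0 ≤ f y) : f s ≤ exp (-c * (y - s - 1)) * f y := by
  set k := ⌊y - s⌋₊
  have hk : (k : ℝ) ≤ y - s := Nat.floor_le (by linarith)
  calc f s ≤ f (y - k) := hf (by linarith)
    _ ≤ exp (-c * k) * f y := apply_sub_natCast_le hstep k (by linarith)
    _ ≤ exp (-c * (y - s - 1)) * f y := by
      have : y - s - 1 < k := Nat.sub_one_lt_floor _
      exact mul_le_mul_of_nonneg_right (exp_le_exp.2 (by nlinarith)) hfy

lemma apply_sub_le_exp_mul_apply (hf : Monotone f) (hc : 0 ≤ c) (hy₀ : 0 ≤ y₀)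
    (hstep : ∀ y ≥ y₀, f (y - 1) ≤ exp (-c) * f y) {u y : ℝ} (hy : y₀ ≤ y) (hu : 0 ≤ u)
    (huy : u ≤ y) (hfy : 0 ≤ f y) : f (y - u) ≤ exp (c * (y₀ + 1)) * exp (-c * u) * f y := by
  set s := max (y - u) y₀
  have hs : s ≤ y - u + y₀ := max_le (by linarith) (by linarith)
  calc f (y - u) ≤ f s := hf (le_max_left _ _)
    _ ≤ exp (-c * (y - s - 1)) * f y :=
      apply_le_exp_mul_apply hf hc hstep (le_max_right _ _) (max_le (by linarith) hy) hfy
    _ ≤ exp (c * (y₀ + 1)) * exp (-c * u) * f y := by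
      rw [← exp_add]
      gcongr
      nlinarith

lemma tendsto_atTop_of_apply_sub_one_le (hf : Monotone f) (hc : 0 < c) (hpos : 0 < f y₀)
    (hstep : ∀ y ≥ y₀, f (y - 1) ≤ exp (-c) * f y) : Tendsto f atTop atTop := by
  have hgrowth : Tendsto (fun y => exp (c * (y - (y₀ + 1))) * f y₀) atTop atTop :=
    (tendsto_exp_atTop.comp ((tendsto_id.atTop_add tendsto_const_nhds).const_mul_atTop hc)
      ).atTop_mul_const hpos
  refine tendsto_atTop_mono' _ ?_ hgrowth
  filter_upwards [eventually_ge_atTop y₀] with y hy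
  have hlow := apply_le_exp_mul_apply hf hc.le hstep le_rfl hy (hpos.le.trans (hf hy))
  rwa [neg_mul, exp_neg, ← div_eq_inv_mul, le_div_iff₀' (exp_pos _), sub_sub] at hlow

end ExponentialDecay

lemma monotone_of_monotoneOn_Ici {f : ℝ → ℝ} (hneg : ∀ y < 0, f y = 0)
    (hnonneg : ∀ y ≥ 0, 0 ≤ f y) (hmono : MonotoneOn f (Ici 0)) : Monotone f := by
  intro a b hab
  rcases lt_or_ge a 0 with ha | ha
  · rcases lt_or_ge b 0 with hb | hb
    · rw [hneg a ha, hneg b hb]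
    · rw [hneg a ha]; exact hnonneg b hb
  · exact hmono ha (ha.trans hab) hab

lemma intervalIntegral_eq_integral_Ioi_indicator (f : ℝ → ℝ) {y : ℝ} (hy : 0 ≤ y) :
    ∫ u in 0..y, f u = ∫ u in Ioi 0, (Ioc 0 y).indicator (fun u => f (y - u)) u := by
  rw [MeasureTheory.integral_indicator measurableSet_Ioc,
    Measure.restrict_restrict measurableSet_Ioc,
    inter_eq_left.2 Ioc_subset_Ioi_self, ← integral_of_le hy, integral_comp_sub_left, sub_self,
    sub_zero]

section RegularGrowth

variable {f : ℝ → ℝ} {Φ : ℝ}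

lemma exists_forall_apply_sub_one_le (hpos : ∀ y ≥ 0, 0 < f y)
    (hratio : Tendsto (fun y => f (y - 1) / f y) atTop (𝓝 (exp (-Φ)))) {c : ℝ} (hc : c < Φ) :
    ∃ y₀ ≥ 0, ∀ y ≥ y₀, f (y - 1) ≤ exp (-c) * f y := by
  have hlt := hratio.eventually_lt_const (exp_lt_exp.2 (neg_lt_neg hc))
  obtain ⟨y₀, hy₀⟩ := eventually_atTop.1 (hlt.and (eventually_ge_atTop 0))
  refine ⟨y₀, (hy₀ y₀ le_rfl).2, fun y hy => ?_⟩
  obtain ⟨hratio_lt, hy0⟩ := hy₀ y hy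
  exact ((div_lt_iff₀ (hpos y hy0)).1 hratio_lt).le

theorem tendsto_integral_div_apply (hf : Monotone f) (hpos : ∀ y ≥ 0, 0 < f y) (hΦ : 0 < Φ)
    (hratio : ∀ u, Tendsto (fun y => f (y + u) / f y) atTop (𝓝 (exp (Φ * u)))) :
    Tendsto (fun y => (∫ u in 0..y, f u) / f y) atTop (𝓝 Φ⁻¹) := by
  obtain ⟨y₀, hy₀, hstep⟩ :=
    exists_forall_apply_sub_one_le hpos (by simpa [← sub_eq_add_neg] using hratio (-1))
      (half_lt_self hΦ)
  have hexp : ∫ u in Ioi 0, exp (-Φ * u) = Φ⁻¹ := by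
    rw [integral_exp_mul_Ioi (by linarith) 0]; simp
  rw [← hexp]
  refine (MeasureTheory.tendsto_integral_filter_of_dominated_convergence
    (F := fun y u => (Ioc 0 y).indicator (fun u => f (y - u)) u / f y)
    (fun u => exp (Φ / 2 * (y₀ + 1)) * exp (-(Φ / 2) * u)) ?_ ?_ ?_ ?_).congr' ?_
  · refine .of_forall fun y => ?_
    exact (((hf.measurable.comp (measurable_const.sub measurable_id)).indicator
      measurableSet_Ioc).div_const _).aestronglyMeasurable
  · filter_upwards [eventually_ge_atTop y₀] with y hy
    rw [ae_restrict_iff' measurableSet_Ioi]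
    refine .of_forall fun u hu => ?_
    have hfy := hpos y (hy₀.trans hy)
    by_cases hmem : u ∈ Ioc 0 y
    · rw [indicator_of_mem hmem, norm_of_nonneg (div_nonneg (hpos _ (by linarith [hmem.2])).le
        hfy.le), div_le_iff₀ hfy]
      exact apply_sub_le_exp_mul_apply hf (by positivity) hy₀ hstep hy hmem.1.le hmem.2 hfy.le
    · rw [indicator_of_notMem hmem, zero_div, norm_zero]
      positivity
  · exact (exp_neg_integrableOn_Ioi 0 (half_pos hΦ)).const_mul _
  · rw [ae_restrict_iff' measurableSet_Ioi]
    refine .of_forall fun u hu => ?_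
    have hlim := hratio (-u)
    rw [mul_neg, ← neg_mul] at hlim
    refine hlim.congr' ?_
    filter_upwards [eventually_ge_atTop u] with y hy
    rw [indicator_of_mem (show u ∈ Ioc 0 y from ⟨hu, hy⟩), sub_eq_add_neg]
  · filter_upwards [eventually_ge_atTop 0] with y hy
    rw [MeasureTheory.integral_div, intervalIntegral_eq_integral_Ioi_indicator f hy]

theorem tendsto_apply_div_one_add_mul_integral (hf : Monotone f) (hpos : ∀ y ≥ 0, 0 < f y)
    (hΦ : 0 < Φ) (hratio : ∀ u, Tendsto (fun y => f (y + u) / f y) atTop (𝓝 (exp (Φ * u))))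
    {lam : ℝ} (hlam : lam ≠ 0) :
    Tendsto (fun y => f y / (1 + lam * ∫ u in 0..y, f u)) atTop (𝓝 (Φ / lam)) := by
  obtain ⟨y₀, hy₀, hstep⟩ :=
    exists_forall_apply_sub_one_le hpos (by simpa [← sub_eq_add_neg] using hratio (-1))
      (half_lt_self hΦ)
  have hinv : Tendsto (fun y => (f y)⁻¹) atTop (𝓝 0) := tendsto_inv_atTop_zero.comp
    (tendsto_atTop_of_apply_sub_one_le hf (half_pos hΦ) (hpos y₀ hy₀) hstep)
  have h := (hinv.add ((tendsto_integral_div_apply hf hpos hΦ hratio).const_mul lam)).inv₀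
    (by simp [hlam, hΦ.ne'])
  rw [zero_add, mul_inv_rev, inv_inv, ← div_eq_mul_inv] at h
  refine h.congr' ?_
  filter_upwards [eventually_ge_atTop 0] with y hy
  have hfy := (hpos y hy).ne'
  field_simp

theorem tendsto_integral_apply_add_div_mul {ρ g : ℝ → ℝ} {x : ℝ} (hf : Monotone f)
    (hpos : ∀ᶠ y in atTop, 0 < f y)
    (hratio : ∀ u, Tendsto (fun y => f (y + u) / f y) atTop (𝓝 (ρ u))) (hx : 0 ≤ x)
    (hg : IntervalIntegrable g volume 0 x) :
    Tendsto (fun y => ∫ z in 0..x, f (y + z) / f y * g z) atTop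
      (𝓝 (∫ z in 0..x, ρ z * g z)) := by
  have hK := (hratio x).eventually_lt_const (lt_add_one (ρ x))
  refine tendsto_integral_filter_of_dominated_convergence (fun z => (ρ x + 1) * ‖g z‖)
    (.of_forall fun y => ?_) ?_ (hg.norm.const_mul _) (.of_forall fun z _ => (hratio z).mul_const _)
  · exact ((hf.measurable.comp (measurable_const_add y)).div_const _).aestronglyMeasurable.mul
      hg.def'.aestronglyMeasurable
  · filter_upwards [hK, hpos] with y hK hfy
    refine .of_forall fun z hz => ?_
    rw [uIoc_of_le hx] at hz
    have hle : f (y + z) ≤ f (y + x) := hf (by linarith [hz.2])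
    have hge : f y ≤ f (y + z) := hf (by linarith [hz.1])
    rw [norm_mul, norm_of_nonneg (div_nonneg (hfy.le.trans hge) hfy.le)]
    gcongr
    exact (div_le_div_of_nonneg_right hle hfy.le).trans hK.le

end RegularGrowth

theorem omega_over_Z_limit_at_minus_infty_general
    (lam Φ : ℝ) (hlam : 0 < lam) (hΦ : 0 < Φ) (x : ℝ) (hx : 0 ≤ x)
    (Wl W : ℝ → ℝ)
    (hWl_zero : ∀ y < 0, Wl y = 0)
    (hWl_pos : ∀ y ≥ 0, 0 < Wl y)
    (hWl_mono : MonotoneOn Wl (Ici (0 : ℝ)))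
    (hratio : ∀ u : ℝ, Tendsto (fun y => Wl (y + u) / Wl y) atTop (nhds (Real.exp (Φ * u))))
    (hW_cont : ContinuousOn W (Icc 0 x)) :
    Tendsto (fun a =>
        (Wl (x - a) - lam * ∫ z in (0 : ℝ)..x, Wl (z - a) * W (x - z)) /
          (1 + lam * ∫ u in (0 : ℝ)..(-a), Wl u))
      atBot
      (nhds ((Φ / lam) *
        (Real.exp (Φ * x) - lam * ∫ z in (0 : ℝ)..x, Real.exp (Φ * z) * W (x - z)))) := by
  have hWl : Monotone Wl :=
    monotone_of_monotoneOn_Ici hWl_zero (fun y hy => (hWl_pos y hy).le) hWl_mono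
  have hW : IntervalIntegrable (fun z => W (x - z)) volume 0 x := by
    simpa using ((hW_cont.intervalIntegrable_of_Icc hx).comp_sub_left x).symm
  have hnum : Tendsto (fun y => (Wl (y + x) - lam * ∫ z in 0..x, Wl (y + z) * W (x - z)) / Wl y)
      atTop (𝓝 (exp (Φ * x) - lam * ∫ z in 0..x, exp (Φ * z) * W (x - z))) := by
    refine ((hratio x).sub ((tendsto_integral_apply_add_div_mul hWl
      ((eventually_ge_atTop 0).mono hWl_pos) hratio hx hW).const_mul lam)).congr fun y => ?_
    simp only [sub_div, mul_div_assoc, ← intervalIntegral.integral_div, div_mul_eq_mul_div]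
  have hquot := (hnum.mul (tendsto_apply_div_one_add_mul_integral hWl hWl_pos hΦ hratio
    hlam.ne')).comp tendsto_neg_atBot_atTop
  rw [mul_comm]
  refine hquot.congr' ?_
  filter_upwards [eventually_le_atBot 0] with a ha
  have hWa : Wl (-a) ≠ 0 := (hWl_pos _ (neg_nonneg.2 ha)).ne'
  simp only [Function.comp_apply, neg_add_eq_sub]
  field_simp

/-- Remark 4.4 of the paper: as `a → −∞`,
`[W_λ(x−a) − λ∫₀ˣ W_λ(z−a)W(x−z)dz]/Z_λ(−a) → (Φ_λ/λ)[e^{Φ_λ x} − λ∫₀ˣ e^{Φ_λ z}W(x−z)dz]`. -/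
theorem omega_over_Z_limit_at_minus_infty
    (lam Φ : ℝ) (hlam : 0 < lam) (hΦ : 0 < Φ) (x : ℝ) (hx : 0 ≤ x)
    (Wl W : ℝ → ℝ)
    (hWl_zero : ∀ y < 0, Wl y = 0)
    (hWl_pos : ∀ y ≥ 0, 0 < Wl y)
    (hWl_cont : ContinuousOn Wl (Ici (0 : ℝ)))
    (hWl_mono : MonotoneOn Wl (Ici (0 : ℝ)))
    (hratio : ∀ u : ℝ, Tendsto (fun y => Wl (y + u) / Wl y) atTop (nhds (Real.exp (Φ * u))))
    (hW_cont : ContinuousOn W (Icc 0 x))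
    (hW_nonneg : ∀ z, 0 ≤ W z)
    (hW_bdd : ∃ M, ∀ z ∈ Icc (0 : ℝ) x, W z ≤ M) :
    Tendsto (fun a =>
        (Wl (x - a) - lam * ∫ z in (0 : ℝ)..x, Wl (z - a) * W (x - z)) /
          (1 + lam * ∫ u in (0 : ℝ)..(-a), Wl u))
      atBot
      (nhds ((Φ / lam) *
        (Real.exp (Φ * x) - lam * ∫ z in (0 : ℝ)..x, Real.exp (Φ * z) * W (x - z)))) :=
  omega_over_Z_limit_at_minus_infty_general lam Φ hlam hΦ x hx Wl W hWl_zero hWl_pos hWl_mono hratio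
    hW_cont
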